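/- arXiv:0803.1249 — 3 statements merged into one kernel-verified Lean document; each statement's English description precedes it below -/
import Mathlib

section
/- The family φ evolves by the (torus-invariant, Euclidean-parameter) Eells–Sampson harmonic map flow, ∂_t φ(t,y,ρ) = Δ_y φ(t,y,ρ) − Σ_{a=1}^{n} ⟨(∇²_ρφ(t,y,ρ))⁻¹ ∇_ρ(∂_{y_a}φ)(t,y,ρ), ∇_ρ(∂_{y_a}φ)(t,y,ρ)⟩ for all (t,y,ρ) ∈ I × Ω × ℝᵐ, if and only if the family of Legendre transforms evolves by the linear heat flow, ∂_t u(t,y,x) = Δ_y u(t,y,x) for all (t,y,x) ∈ I × Ω × P. (Under the Legendre transform the Eells–Sampson flow on Kähler potentials is mapped to the heat flow on symplectic potentials.) -/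
open scoped BigOperators
open MeasureTheory Real

noncomputable section

/-- Partial derivative of `f` at `p` in the `i`-th coordinate direction. -/
def pd {k : ℕ} (f : (Fin k → ℝ) → ℝ) (i : Fin k) (p : Fin k → ℝ) : ℝ :=
  fderiv ℝ f p (Pi.single i 1)

/-- Euclidean gradient, as the vector of partial derivatives. -/
def grad {k : ℕ} (f : (Fin k → ℝ) → ℝ) (p : Fin k → ℝ) : Fin k → ℝ :=
  fun i => pd f i p

/-- Hessian matrix of second partial derivatives. -/
def hess {k : ℕ} (f : (Fin k → ℝ) → ℝ) (p : Fin k → ℝ) : Matrix (Fin k) (Fin k) ℝ :=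
  Matrix.of fun i j => pd (fun q => pd f j q) i p

/-- Euclidean Laplacian. -/
def lap {k : ℕ} (f : (Fin k → ℝ) → ℝ) (p : Fin k → ℝ) : ℝ :=
  ∑ i, pd (fun q => pd f i q) i p

/-- Euclidean inner product on `Fin k → ℝ`. -/
def dotp {k : ℕ} (v w : Fin k → ℝ) : ℝ := ∑ i, v i * w i

/-! Write the Legendre relation as `φ(s, ρ) = ⟨∇_ρ φ, ρ⟩ - u(s, ∇_ρ φ)`, where `s = (t, y)`.
Differentiating it once and using that the fibre Hessian `H = ∇²_ρ φ` is invertible gives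
`∇_x u = ρ` at `x = ∇_ρ φ`, hence `∂_s φ(s, ρ) = -∂_s u(s, ∇_ρ φ)` for every parameter direction.
Differentiating this again, in `ρ` gives `∇_ρ ∂_s φ = -H v` with `v = ∇_x ∂_s u`, and in `s` gives
`∂²_s φ = -∂²_s u + ⟨H v, v⟩` by symmetry of mixed partials; and `⟨H v, v⟩` is exactly the
Eells–Sampson term `⟨H⁻¹ ∇_ρ ∂_s φ, ∇_ρ ∂_s φ⟩`. Taking `s = t` and summing over `s = y_a`, the
Eells–Sampson residual of `φ` at `ρ` is minus the heat residual of `u` at `∇_ρ φ(ρ)`, and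
`∇_ρ φ` maps onto `P`. -/

open Set Matrix

section Calculus

variable {𝕜 E F G : Type*} [NontriviallyNormedField 𝕜] [NormedAddCommGroup E] [NormedSpace 𝕜 E]
  [NormedAddCommGroup F] [NormedSpace 𝕜 F] [NormedAddCommGroup G] [NormedSpace 𝕜 G]

theorem fderiv_comp_prodMk_left_apply {f : E × F → G} {x : E} {y : F}
    (hf : DifferentiableAt 𝕜 f (x, y)) (v : E) :
    fderiv 𝕜 (fun x' => f (x', y)) x v = fderiv 𝕜 f (x, y) (v, 0) := by
  rw [fderiv_fun_comp x hf (hasFDerivAt_prodMk_left x y).differentiableAt,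
    (hasFDerivAt_prodMk_left x y).fderiv]
  rfl

theorem fderiv_comp_prodMk_right_apply {f : E × F → G} {x : E} {y : F}
    (hf : DifferentiableAt 𝕜 f (x, y)) (w : F) :
    fderiv 𝕜 (fun y' => f (x, y')) y w = fderiv 𝕜 f (x, y) (0, w) := by
  rw [fderiv_fun_comp y hf (hasFDerivAt_prodMk_right x y).differentiableAt,
    (hasFDerivAt_prodMk_right x y).fderiv]
  rfl

theorem fderiv_pi_apply {ι : Type*} [Fintype ι] {f : E → ι → 𝕜} {x : E}
    (hf : DifferentiableAt 𝕜 f x) (v : E) (i : ι) :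
    fderiv 𝕜 f x v i = fderiv 𝕜 (fun x' => f x' i) x v := by
  rw [fderiv_apply hf i]
  rfl

theorem ContDiffOn.differentiableAt_fderiv_apply {f : E → G} {s : Set E} (hf : ContDiffOn 𝕜 2 f s)
    (hs : IsOpen s) {x : E} (hx : x ∈ s) (v : E) :
    DifferentiableAt 𝕜 (fun x' => fderiv 𝕜 f x' v) x :=
  (((hf.fderiv_of_isOpen hs le_rfl).clm_apply contDiffOn_const).contDiffAt
    (hs.mem_nhds hx)).differentiableAt one_ne_zero

theorem ContDiffOn.comp_prodAssoc {H : Type*} [NormedAddCommGroup H] [NormedSpace 𝕜 H]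
    {k : WithTop ℕ∞} {f : E × F × G → H} {s : Set E} {t : Set F}
    {u : Set G} (hf : ContDiffOn 𝕜 k f (s ×ˢ t ×ˢ u)) :
    ContDiffOn 𝕜 k (fun p : (E × F) × G => f (p.1.1, p.1.2, p.2)) ((s ×ˢ t) ×ˢ u) :=
  hf.comp (by fun_prop : ContDiff 𝕜 k fun p : (E × F) × G => (p.1.1, p.1.2, p.2)).contDiffOn
    fun _ hp => ⟨hp.1.1, hp.1.2, hp.2⟩

end Calculus

theorem fderiv_fderiv_apply_comm {𝕜 E G : Type*} [RCLike 𝕜] [NormedAddCommGroup E]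
    [NormedSpace 𝕜 E] [NormedAddCommGroup G] [NormedSpace 𝕜 G] {f : E → G} {x : E}
    (hf : ContDiffAt 𝕜 2 f x) (v w : E) :
    fderiv 𝕜 (fun x' => fderiv 𝕜 f x' w) x v = fderiv 𝕜 (fun x' => fderiv 𝕜 f x' v) x w := by
  have hd : DifferentiableAt 𝕜 (fderiv 𝕜 f) x :=
    (hf.fderiv_right (m := 1) le_rfl).differentiableAt one_ne_zero
  rw [fderiv_clm_apply hd (differentiableAt_const w),
    fderiv_clm_apply hd (differentiableAt_const v)]
  simpa using hf.isSymmSndFDerivAt (by simp [minSmoothness_of_isRCLikeNormedField]) v w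

section Legendre

variable {E : Type*} [NormedAddCommGroup E] [NormedSpace ℝ E] {m : ℕ}

def fiberGrad (Φ : E × (Fin m → ℝ) → ℝ) (q : E × (Fin m → ℝ)) : Fin m → ℝ :=
  grad (fun ρ => Φ (q.1, ρ)) q.2

def fiberHess (Φ : E × (Fin m → ℝ) → ℝ) (q : E × (Fin m → ℝ)) : Matrix (Fin m) (Fin m) ℝ :=
  hess (fun ρ => Φ (q.1, ρ)) q.2

def legendreMap (Φ : E × (Fin m → ℝ) → ℝ) (q : E × (Fin m → ℝ)) : E × (Fin m → ℝ) :=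
  (q.1, fiberGrad Φ q)

theorem fiberGrad_apply {Φ : E × (Fin m → ℝ) → ℝ} {q : E × (Fin m → ℝ)}
    (hΦ : DifferentiableAt ℝ Φ q) (i : Fin m) :
    fiberGrad Φ q i = fderiv ℝ Φ q (0, Pi.single i 1) :=
  fderiv_comp_prodMk_right_apply hΦ _

theorem fderiv_apply_eq_add_dotProduct_fiberGrad {U : E × (Fin m → ℝ) → ℝ}
    {x : E × (Fin m → ℝ)} (hU : DifferentiableAt ℝ U x) (e : E) (c : Fin m → ℝ) :
    fderiv ℝ U x (e, c) = fderiv ℝ U x (e, 0) + c ⬝ᵥ fiberGrad U x := by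
  have hc : ((e, c) : E × (Fin m → ℝ)) = (e, 0) + ∑ j, c j • ((0 : E), Pi.single j 1) := by
    ext j <;> simp [Prod.fst_sum, Prod.snd_sum, Finset.sum_apply, Pi.single_apply]
  rw [hc, map_add, map_sum]
  simp only [map_smul, smul_eq_mul]
  simp [dotProduct, fiberGrad_apply hU]

theorem contDiffOn_fiberGrad {S : Set (E × (Fin m → ℝ))} (hS : IsOpen S)
    {Φ : E × (Fin m → ℝ) → ℝ} (hΦ : ContDiffOn ℝ 2 Φ S) : ContDiffOn ℝ 1 (fiberGrad Φ) S := by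
  refine contDiffOn_pi.2 fun i => ?_
  refine ((hΦ.fderiv_of_isOpen hS le_rfl).clm_apply
    (contDiffOn_const (c := ((0 : E), Pi.single i 1)))).congr fun q hq => ?_
  exact fiberGrad_apply ((hΦ.contDiffAt (hS.mem_nhds hq)).differentiableAt two_ne_zero) i

theorem fiberHess_apply {S : Set (E × (Fin m → ℝ))} (hS : IsOpen S)
    {Φ : E × (Fin m → ℝ) → ℝ} (hΦ : ContDiffOn ℝ 2 Φ S) {q : E × (Fin m → ℝ)} (hq : q ∈ S)
    (i j : Fin m) :
    fiberHess Φ q i j = fderiv ℝ (fiberGrad Φ) q (0, Pi.single i 1) j := by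
  have hg : DifferentiableAt ℝ (fiberGrad Φ) q :=
    ((contDiffOn_fiberGrad hS hΦ).contDiffAt (hS.mem_nhds hq)).differentiableAt one_ne_zero
  calc fiberHess Φ q i j = fderiv ℝ (fun q' => fiberGrad Φ q' j) q (0, Pi.single i 1) :=
        fderiv_comp_prodMk_right_apply ((differentiableAt_apply j _).comp q hg) _
    _ = _ := by rw [fderiv_apply hg j]; rfl

/-- `Φ` and `U` are fibrewise Legendre dual on `S`, in the one form the argument needs:
`Φ(s, ρ) = ⟨∇_ρ Φ, ρ⟩ - U(s, ∇_ρ Φ)`. No inverse of the gradient map `ρ ↦ ∇_ρ Φ` enters. -/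
structure IsLegendreDual (S T : Set (E × (Fin m → ℝ))) (Φ U : E × (Fin m → ℝ) → ℝ) : Prop where
  isOpen_left : IsOpen S
  isOpen_right : IsOpen T
  contDiffOn_left : ContDiffOn ℝ 2 Φ S
  contDiffOn_right : ContDiffOn ℝ 2 U T
  mapsTo : MapsTo (legendreMap Φ) S T
  eq_dotProduct_sub : ∀ q ∈ S, Φ q = fiberGrad Φ q ⬝ᵥ q.2 - U (legendreMap Φ q)

namespace IsLegendreDual

variable {S T : Set (E × (Fin m → ℝ))} {Φ U : E × (Fin m → ℝ) → ℝ}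
  (h : IsLegendreDual S T Φ U) {q : E × (Fin m → ℝ)}
include h

theorem differentiableAt_left (hq : q ∈ S) : DifferentiableAt ℝ Φ q :=
  (h.contDiffOn_left.contDiffAt (h.isOpen_left.mem_nhds hq)).differentiableAt two_ne_zero

theorem differentiableAt_right {x : E × (Fin m → ℝ)} (hx : x ∈ T) : DifferentiableAt ℝ U x :=
  (h.contDiffOn_right.contDiffAt (h.isOpen_right.mem_nhds hx)).differentiableAt two_ne_zero

theorem differentiableAt_fiberGrad (hq : q ∈ S) : DifferentiableAt ℝ (fiberGrad Φ) q :=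
  ((contDiffOn_fiberGrad h.isOpen_left h.contDiffOn_left).contDiffAt
    (h.isOpen_left.mem_nhds hq)).differentiableAt one_ne_zero

theorem hasFDerivAt_legendreMap (hq : q ∈ S) :
    HasFDerivAt (legendreMap Φ)
      ((ContinuousLinearMap.fst ℝ E (Fin m → ℝ)).prod (fderiv ℝ (fiberGrad Φ) q)) q :=
  hasFDerivAt_fst.prodMk (h.differentiableAt_fiberGrad hq).hasFDerivAt

theorem fderiv_left_apply (hq : q ∈ S) (w : E × (Fin m → ℝ)) :
    fderiv ℝ Φ q w = fderiv ℝ (fiberGrad Φ) q w ⬝ᵥ (q.2 - fiberGrad U (legendreMap Φ q))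
      + fiberGrad Φ q ⬝ᵥ w.2 - fderiv ℝ U (legendreMap Φ q) (w.1, 0) := by
  have hg := (h.differentiableAt_fiberGrad hq).hasFDerivAt
  have hdot : HasFDerivAt (fun q : E × (Fin m → ℝ) => fiberGrad Φ q ⬝ᵥ q.2)
      (∑ i, (fiberGrad Φ q i • (ContinuousLinearMap.proj i).comp
          (ContinuousLinearMap.snd ℝ E (Fin m → ℝ))
        + q.2 i • (ContinuousLinearMap.proj i).comp (fderiv ℝ (fiberGrad Φ) q))) q :=
    HasFDerivAt.fun_sum fun i _ =>
      (hasFDerivAt_pi'.1 hg i).mul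
        ((ContinuousLinearMap.proj i).comp (ContinuousLinearMap.snd ℝ E (Fin m → ℝ))).hasFDerivAt
  have hU := (h.differentiableAt_right (h.mapsTo hq)).hasFDerivAt.comp q
    (h.hasFDerivAt_legendreMap hq)
  have hΦ := (hdot.sub hU).congr_of_eventuallyEq
    (Filter.eventually_of_mem (h.isOpen_left.mem_nhds hq) h.eq_dotProduct_sub)
  rw [hΦ.fderiv, _root_.sub_apply, ContinuousLinearMap.comp_apply,
    ContinuousLinearMap.prod_apply, fderiv_apply_eq_add_dotProduct_fiberGrad
      (h.differentiableAt_right (h.mapsTo hq)), dotProduct_sub]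
  simp [dotProduct, Finset.sum_add_distrib, mul_comm]
  ring

theorem fiberHess_mulVec_apply (hq : q ∈ S) (v : Fin m → ℝ) (i : Fin m) :
    (fiberHess Φ q *ᵥ v) i = fderiv ℝ (fiberGrad Φ) q (0, Pi.single i 1) ⬝ᵥ v := by
  change (fun j => fiberHess Φ q i j) ⬝ᵥ v = _
  simp_rw [fiberHess_apply h.isOpen_left h.contDiffOn_left hq]

theorem fiberGrad_legendreMap (hq : q ∈ S) (hH : IsUnit (fiberHess Φ q)) :
    fiberGrad U (legendreMap Φ q) = q.2 := by
  have hker : fiberHess Φ q *ᵥ (q.2 - fiberGrad U (legendreMap Φ q)) = fiberHess Φ q *ᵥ 0 := by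
    funext i
    have hi := h.fderiv_left_apply hq (0, Pi.single i 1)
    rw [← fiberGrad_apply (h.differentiableAt_left hq), dotProduct_single, mul_one,
      Prod.mk_zero_zero, map_zero] at hi
    rw [h.fiberHess_mulVec_apply hq, Matrix.mulVec_zero, Pi.zero_apply]
    linarith
  exact (sub_eq_zero.1 (Matrix.mulVec_injective_iff_isUnit.2 hH hker)).symm

theorem fderiv_left_apply_inl (hq : q ∈ S) (hH : IsUnit (fiberHess Φ q)) (e : E) :
    fderiv ℝ Φ q (e, 0) = -fderiv ℝ U (legendreMap Φ q) (e, 0) := by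
  rw [h.fderiv_left_apply hq, h.fiberGrad_legendreMap hq hH, sub_self, dotProduct_zero,
    dotProduct_zero, zero_add, zero_sub]

theorem fderiv_fderiv_left_apply_inl (hp : p ∈ S) (hH : ∀ q ∈ S, IsUnit (fiberHess Φ q))
    (e : E) (w : E × (Fin m → ℝ)) :
    fderiv ℝ (fun q => fderiv ℝ Φ q (e, 0)) p w
      = -fderiv ℝ (fun x => fderiv ℝ U x (e, 0)) (legendreMap Φ p)
          (w.1, fderiv ℝ (fiberGrad Φ) p w) := by
  have hV := h.contDiffOn_right.differentiableAt_fderiv_apply h.isOpen_right (h.mapsTo hp) (e, 0)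
  have hψ := (hV.hasFDerivAt.comp p (h.hasFDerivAt_legendreMap hp)).neg.congr_of_eventuallyEq
    (Filter.eventually_of_mem (h.isOpen_left.mem_nhds hp) fun q hq =>
      h.fderiv_left_apply_inl hq (hH q hq) e)
  rw [hψ.fderiv]
  rfl

theorem fderiv_fiberGrad_apply_inl (hp : p ∈ S) (e : E) :
    fderiv ℝ (fiberGrad Φ) p (e, 0) = fiberGrad (fun q => fderiv ℝ Φ q (e, 0)) p := by
  funext j
  have hg : (fun q => fiberGrad Φ q j) =ᶠ[nhds p] fun q => fderiv ℝ Φ q (0, Pi.single j 1) :=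
    Filter.eventually_of_mem (h.isOpen_left.mem_nhds hp) fun q hq =>
      fiberGrad_apply (h.differentiableAt_left hq) j
  rw [fderiv_pi_apply (h.differentiableAt_fiberGrad hp), hg.fderiv_eq,
    fderiv_fderiv_apply_comm (h.contDiffOn_left.contDiffAt (h.isOpen_left.mem_nhds hp)),
    fiberGrad_apply (h.contDiffOn_left.differentiableAt_fderiv_apply h.isOpen_left hp _)]

theorem fderiv_fderiv_left_sub_inv_hess_dotProduct (hp : p ∈ S)
    (hH : ∀ q ∈ S, IsUnit (fiberHess Φ q)) (e : E) :
    fderiv ℝ (fun q => fderiv ℝ Φ q (e, 0)) p (e, 0)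
      - ((fiberHess Φ p)⁻¹ *ᵥ fiberGrad (fun q => fderiv ℝ Φ q (e, 0)) p)
          ⬝ᵥ fiberGrad (fun q => fderiv ℝ Φ q (e, 0)) p
      = -fderiv ℝ (fun x => fderiv ℝ U x (e, 0)) (legendreMap Φ p) (e, 0) := by
  set V := fun x => fderiv ℝ U x (e, 0)
  set v := fiberGrad V (legendreMap Φ p)
  have hV : DifferentiableAt ℝ V (legendreMap Φ p) :=
    h.contDiffOn_right.differentiableAt_fderiv_apply h.isOpen_right (h.mapsTo hp) (e, 0)
  have hψ : DifferentiableAt ℝ (fun q => fderiv ℝ Φ q (e, 0)) p :=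
    h.contDiffOn_left.differentiableAt_fderiv_apply h.isOpen_left hp (e, 0)
  have hgrad : fiberGrad (fun q => fderiv ℝ Φ q (e, 0)) p = -(fiberHess Φ p *ᵥ v) := by
    funext j
    rw [fiberGrad_apply hψ, h.fderiv_fderiv_left_apply_inl hp hH,
      fderiv_apply_eq_add_dotProduct_fiberGrad hV, Prod.mk_zero_zero, map_zero, zero_add,
      Pi.neg_apply, h.fiberHess_mulVec_apply hp]
  have hsecond : fderiv ℝ (fun q => fderiv ℝ Φ q (e, 0)) p (e, 0)
      = -(fderiv ℝ V (legendreMap Φ p) (e, 0) - (fiberHess Φ p *ᵥ v) ⬝ᵥ v) := by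
    rw [h.fderiv_fderiv_left_apply_inl hp hH, fderiv_apply_eq_add_dotProduct_fiberGrad hV,
      h.fderiv_fiberGrad_apply_inl hp, hgrad, neg_dotProduct, sub_eq_add_neg]
  have hinv : (fiberHess Φ p)⁻¹ *ᵥ (fiberHess Φ p *ᵥ v) = v := by
    rw [Matrix.mulVec_mulVec, Matrix.nonsing_inv_mul _
      (Matrix.isUnit_iff_isUnit_det _ |>.1 (hH p hp)), Matrix.one_mulVec]
  rw [hsecond, hgrad, Matrix.mulVec_neg, hinv, neg_dotProduct, dotProduct_neg,
    dotProduct_comm v]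
  ring

end IsLegendreDual

end Legendre

section SpaceTime

variable {n : ℕ} {X : Type*} [NormedAddCommGroup X] [NormedSpace ℝ X]
  {F : (ℝ × (Fin n → ℝ)) × X → ℝ} {t : ℝ} {y : Fin n → ℝ} {x : X}

theorem deriv_comp_time (hF : DifferentiableAt ℝ F ((t, y), x)) :
    deriv (fun t' => F ((t', y), x)) t = fderiv ℝ F ((t, y), x) ((1, 0), 0) := by
  have hG : DifferentiableAt ℝ (fun s => F (s, x)) (t, y) :=
    hF.comp (t, y) (hasFDerivAt_prodMk_left (t, y) x).differentiableAt
  rw [← fderiv_apply_one_eq_deriv, fderiv_comp_prodMk_left_apply (f := fun s => F (s, x)) hG,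
    fderiv_comp_prodMk_left_apply hF]

theorem pd_comp_space (hF : DifferentiableAt ℝ F ((t, y), x)) (a : Fin n) :
    pd (fun y' => F ((t, y'), x)) a y = fderiv ℝ F ((t, y), x) ((0, Pi.single a 1), 0) := by
  have hG : DifferentiableAt ℝ (fun s => F (s, x)) (t, y) :=
    hF.comp (t, y) (hasFDerivAt_prodMk_left (t, y) x).differentiableAt
  rw [pd, fderiv_comp_prodMk_right_apply (f := fun s => F (s, x)) hG,
    fderiv_comp_prodMk_left_apply hF]

theorem lap_comp_space {S : Set ((ℝ × (Fin n → ℝ)) × X)} (hS : IsOpen S) (hF : ContDiffOn ℝ 2 F S)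
    (hmem : ((t, y), x) ∈ S) :
    lap (fun y' => F ((t, y'), x)) y
      = ∑ a, fderiv ℝ (fun q => fderiv ℝ F q ((0, Pi.single a 1), 0)) ((t, y), x)
          ((0, Pi.single a 1), 0) := by
  have hnear : ∀ᶠ y' in nhds y, ((t, y'), x) ∈ S :=
    (by fun_prop : Continuous fun y' : Fin n → ℝ => ((t, y'), x)).continuousAt.preimage_mem_nhds
      (hS.mem_nhds hmem)
  refine Finset.sum_congr rfl fun a _ => ?_
  have hpd : (fun y' => pd (fun y'' => F ((t, y''), x)) a y')
      =ᶠ[nhds y] fun y' => fderiv ℝ F ((t, y'), x) ((0, Pi.single a 1), 0) :=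
    hnear.mono fun y' hy' =>
      pd_comp_space ((hF.contDiffAt (hS.mem_nhds hy')).differentiableAt two_ne_zero) a
  rw [pd, hpd.fderiv_eq, ← pd,
    pd_comp_space (hF.differentiableAt_fderiv_apply hS hmem _)]

end SpaceTime

theorem IsLegendreDual.eellsSampson_residual_eq_neg_heat_residual {n m : ℕ}
    {S T : Set ((ℝ × (Fin n → ℝ)) × (Fin m → ℝ))} {Φ U : (ℝ × (Fin n → ℝ)) × (Fin m → ℝ) → ℝ}
    (h : IsLegendreDual S T Φ U) (hH : ∀ q ∈ S, IsUnit (fiberHess Φ q)) {t : ℝ}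
    {y : Fin n → ℝ} (hS : ∀ ρ, ((t, y), ρ) ∈ S) (ρ : Fin m → ℝ) :
    deriv (fun t' => Φ ((t', y), ρ)) t
        - (lap (fun y' => Φ ((t, y'), ρ)) y
          - ∑ a, ((fiberHess Φ ((t, y), ρ))⁻¹
                *ᵥ grad (fun ρ' => pd (fun y' => Φ ((t, y'), ρ')) a y) ρ)
              ⬝ᵥ grad (fun ρ' => pd (fun y' => Φ ((t, y'), ρ')) a y) ρ)
      = -(deriv (fun t' => U ((t', y), fiberGrad Φ ((t, y), ρ))) t
          - lap (fun y' => U ((t, y'), fiberGrad Φ ((t, y), ρ))) y) := by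
  have hT : ((t, y), fiberGrad Φ ((t, y), ρ)) ∈ T := h.mapsTo (hS ρ)
  have hgrad : ∀ a, grad (fun ρ' => pd (fun y' => Φ ((t, y'), ρ')) a y) ρ
      = fiberGrad (fun q => fderiv ℝ Φ q ((0, Pi.single a 1), 0)) ((t, y), ρ) := fun a =>
    congrArg (grad · ρ) (funext fun ρ' => pd_comp_space (h.differentiableAt_left (hS ρ')) a)
  rw [deriv_comp_time (h.differentiableAt_left (hS ρ)),
    deriv_comp_time (h.differentiableAt_right hT),
    lap_comp_space h.isOpen_left h.contDiffOn_left (hS ρ),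
    lap_comp_space h.isOpen_right h.contDiffOn_right hT,
    h.fderiv_left_apply_inl (hS ρ) (hH _ (hS ρ)), ← Finset.sum_sub_distrib]
  simp_rw [hgrad, h.fderiv_fderiv_left_sub_inv_hess_dotProduct (hS ρ) hH]
  simp only [Finset.sum_neg_distrib, legendreMap]
  ring

theorem eells_sampson_flow_iff_heat_flow_general
    {m n : ℕ}
    (I : Set ℝ) (a b : ℝ) (hI : I = Set.Ioo a b)
    (Ω : Set (Fin n → ℝ)) (hΩ : IsOpen Ω)
    (P : Set (Fin m → ℝ)) (hP : IsOpen P)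
    (φ : ℝ → (Fin n → ℝ) → (Fin m → ℝ) → ℝ)
    (hφ : ContDiffOn ℝ (⊤ : ℕ∞)
      (fun p : ℝ × (Fin n → ℝ) × (Fin m → ℝ) => φ p.1 p.2.1 p.2.2)
      (I ×ˢ Ω ×ˢ Set.univ))
    (hpos : ∀ t ∈ I, ∀ y ∈ Ω, ∀ ρ : Fin m → ℝ, (hess (φ t y) ρ).PosDef)
    (R : ℝ → (Fin n → ℝ) → (Fin m → ℝ) → (Fin m → ℝ))
    (hmem : ∀ t ∈ I, ∀ y ∈ Ω, ∀ ρ : Fin m → ℝ, grad (φ t y) ρ ∈ P)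
    (hR₁ : ∀ t ∈ I, ∀ y ∈ Ω, ∀ x ∈ P, grad (φ t y) (R t y x) = x)
    (hR₂ : ∀ t ∈ I, ∀ y ∈ Ω, ∀ ρ : Fin m → ℝ, R t y (grad (φ t y) ρ) = ρ)
    (u : ℝ → (Fin n → ℝ) → (Fin m → ℝ) → ℝ)
    (hu : ∀ t ∈ I, ∀ y ∈ Ω, ∀ x ∈ P,
      u t y x = dotp x (R t y x) - φ t y (R t y x))
    (husm : ContDiffOn ℝ (⊤ : ℕ∞)
      (fun p : ℝ × (Fin n → ℝ) × (Fin m → ℝ) => u p.1 p.2.1 p.2.2)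
      (I ×ˢ Ω ×ˢ P)) :
    (∀ t ∈ I, ∀ y ∈ Ω, ∀ ρ : Fin m → ℝ,
        deriv (fun t' => φ t' y ρ) t
          = lap (fun y' => φ t y' ρ) y
            - ∑ c : Fin n,
                dotp
                  ((hess (φ t y) ρ)⁻¹.mulVec
                    (grad (fun ρ' => pd (fun y' => φ t y' ρ') c y) ρ))
                  (grad (fun ρ' => pd (fun y' => φ t y' ρ') c y) ρ))
      ↔ (∀ t ∈ I, ∀ y ∈ Ω, ∀ x ∈ P,
          deriv (fun t' => u t' y x) t = lap (fun y' => u t y' x) y) := by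
  have hIo : IsOpen I := hI ▸ isOpen_Ioo
  have hdual : IsLegendreDual ((I ×ˢ Ω) ×ˢ univ) ((I ×ˢ Ω) ×ˢ P)
      (fun q => φ q.1.1 q.1.2 q.2) (fun q => u q.1.1 q.1.2 q.2) :=
    { isOpen_left := (hIo.prod hΩ).prod isOpen_univ
      isOpen_right := (hIo.prod hΩ).prod hP
      contDiffOn_left := hφ.comp_prodAssoc.of_le (WithTop.coe_le_coe.2 le_top)
      contDiffOn_right := husm.comp_prodAssoc.of_le (WithTop.coe_le_coe.2 le_top)
      mapsTo := fun q hq => ⟨hq.1, hmem _ hq.1.1 _ hq.1.2 _⟩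
      eq_dotProduct_sub := fun q hq => by
        have hLeg := hu _ hq.1.1 _ hq.1.2 _ (hmem _ hq.1.1 _ hq.1.2 q.2)
        rw [hR₂ _ hq.1.1 _ hq.1.2] at hLeg
        change φ q.1.1 q.1.2 q.2
          = dotp (grad (φ q.1.1 q.1.2) q.2) q.2 - u q.1.1 q.1.2 (grad (φ q.1.1 q.1.2) q.2)
        linarith }
  have hres : ∀ t ∈ I, ∀ y ∈ Ω, ∀ ρ : Fin m → ℝ,
      deriv (fun t' => φ t' y ρ) t
          - (lap (fun y' => φ t y' ρ) y
            - ∑ c : Fin n, dotp ((hess (φ t y) ρ)⁻¹.mulVec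
                (grad (fun ρ' => pd (fun y' => φ t y' ρ') c y) ρ))
              (grad (fun ρ' => pd (fun y' => φ t y' ρ') c y) ρ))
        = -(deriv (fun t' => u t' y (grad (φ t y) ρ)) t
            - lap (fun y' => u t y' (grad (φ t y) ρ)) y) := fun t ht y hy =>
    hdual.eellsSampson_residual_eq_neg_heat_residual (fun q hq => (hpos _ hq.1.1 _ hq.1.2 _).isUnit)
      fun _ => ⟨⟨ht, hy⟩, trivial⟩
  constructor
  · intro hES t ht y hy x hx
    have hx' := hres t ht y hy (R t y x)
    rw [hR₁ t ht y hy x hx] at hx'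
    linarith [hES t ht y hy (R t y x)]
  · intro hheat t ht y hy ρ
    linarith [hres t ht y hy ρ, hheat t ht y hy _ (hmem t ht y hy ρ)]

/-- **Legendre duality of geometric flows.**  A smooth family `φ(t,y,ρ)` evolves by the
torus-invariant Eells–Sampson harmonic map flow iff the family of fiberwise Legendre
transforms `u(t,y,x)` evolves by the linear heat flow `∂_t u = Δ_y u`. -/
theorem eells_sampson_flow_iff_heat_flow
    {m n : ℕ} (hm : 1 ≤ m) (hn : 1 ≤ n)
    (I : Set ℝ) (a b : ℝ) (hI : I = Set.Ioo a b)
    (Ω : Set (Fin n → ℝ)) (hΩ : IsOpen Ω)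
    (P : Set (Fin m → ℝ)) (hP : IsOpen P)
    (φ : ℝ → (Fin n → ℝ) → (Fin m → ℝ) → ℝ)
    (hφ : ContDiffOn ℝ (⊤ : ℕ∞)
      (fun p : ℝ × (Fin n → ℝ) × (Fin m → ℝ) => φ p.1 p.2.1 p.2.2)
      (I ×ˢ Ω ×ˢ Set.univ))
    (hpos : ∀ t ∈ I, ∀ y ∈ Ω, ∀ ρ : Fin m → ℝ, (hess (φ t y) ρ).PosDef)
    (R : ℝ → (Fin n → ℝ) → (Fin m → ℝ) → (Fin m → ℝ))
    (hmem : ∀ t ∈ I, ∀ y ∈ Ω, ∀ ρ : Fin m → ℝ, grad (φ t y) ρ ∈ P)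
    (hR₁ : ∀ t ∈ I, ∀ y ∈ Ω, ∀ x ∈ P, grad (φ t y) (R t y x) = x)
    (hR₂ : ∀ t ∈ I, ∀ y ∈ Ω, ∀ ρ : Fin m → ℝ, R t y (grad (φ t y) ρ) = ρ)
    (u : ℝ → (Fin n → ℝ) → (Fin m → ℝ) → ℝ)
    (hu : ∀ t ∈ I, ∀ y ∈ Ω, ∀ x ∈ P,
      u t y x = dotp x (R t y x) - φ t y (R t y x))
    (husm : ContDiffOn ℝ (⊤ : ℕ∞)
      (fun p : ℝ × (Fin n → ℝ) × (Fin m → ℝ) => u p.1 p.2.1 p.2.2)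
      (I ×ˢ Ω ×ˢ P)) :
    (∀ t ∈ I, ∀ y ∈ Ω, ∀ ρ : Fin m → ℝ,
        deriv (fun t' => φ t' y ρ) t
          = lap (fun y' => φ t y' ρ) y
            - ∑ c : Fin n,
                dotp
                  ((hess (φ t y) ρ)⁻¹.mulVec
                    (grad (fun ρ' => pd (fun y' => φ t y' ρ') c y) ρ))
                  (grad (fun ρ' => pd (fun y' => φ t y' ρ') c y) ρ))
      ↔ (∀ t ∈ I, ∀ y ∈ Ω, ∀ x ∈ P,
          deriv (fun t' => u t' y x) t = lap (fun y' => u t y' x) y) :=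
  eells_sampson_flow_iff_heat_flow_general I a b hI Ω hΩ P hP φ hφ hpos R hmem hR₁ hR₂ u hu husm
end
end

section
/- Second variation of the Legendre transform: for every t ∈ I and x ∈ P, letting ρ = ρ(t,x) = (∇_ρφ(t,·))⁻¹(x), one has ∂²u/∂t²(t,x) + ∂²φ/∂t²(t,ρ) + ⟨∇_ρ(∂_tφ)(t,ρ), ∇_x(∂_tu)(t,x)⟩ = 0; equivalently, ∂²u/∂t²(t,x) = −∂²φ/∂t²(t,ρ) + ⟨(∇²_ρφ(t,ρ))⁻¹ ∇_ρ(∂_tφ)(t,ρ), ∇_ρ(∂_tφ)(t,ρ)⟩. -/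
open scoped BigOperators
open MeasureTheory Real

noncomputable section

/-!
The inverse function theorem, applied to `(t, ρ) ↦ (t, ∇_ρφ(t, ρ))` (whose derivative is
invertible because the Hessian is), shows that `R` is `C¹`. Differentiating
`u = ⟨x, R⟩ - φ(t, R)` and using `∇_ρφ(t, R) = x` gives the envelope identities
`∂_t u = -∂_tφ(t, R)` and `∇_x u = R`. Differentiating the first one in `t` along the curve
`s ↦ R(s, x)` gives `∂²_t u = -∂²_tφ - ⟨∇_ρ∂_tφ, ∂_t R⟩`, and by symmetry of the mixed partials
of `u`, `∂_t R = ∂_t ∇_x u = ∇_x ∂_t u`: this is the first identity. Differentiating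
`∇_ρφ(t, R(t, x)) = x` in `t` gives `∇²_ρφ ∂_t R = -∇_ρ∂_tφ`, which turns it into the second.
-/

open Filter Topology
open scoped Matrix

section Slices

variable {E F : Type*} [NormedAddCommGroup E] [NormedSpace ℝ E]
  [NormedAddCommGroup F] [NormedSpace ℝ F] {Ψ : ℝ × E → F}

theorem deriv_slice_left {c : ℝ} {y : E} (h : DifferentiableAt ℝ Ψ (c, y)) :
    deriv (fun s => Ψ (s, y)) c = fderiv ℝ Ψ (c, y) (1, 0) := by
  have := (h.hasFDerivAt.comp c (hasFDerivAt_prodMk_left c y)).hasDerivAt.deriv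
  simpa [Function.comp_def] using this

theorem fderiv_slice_right {c : ℝ} {y : E} (h : DifferentiableAt ℝ Ψ (c, y)) (w : E) :
    fderiv ℝ (fun z => Ψ (c, z)) y w = fderiv ℝ Ψ (c, y) (0, w) := by
  have := (h.hasFDerivAt.comp y (hasFDerivAt_prodMk_right c y)).fderiv
  simpa [Function.comp_def] using congrArg (· w) this

theorem fderiv_apply_eq_add_slices {c : ℝ} {y : E} (h : DifferentiableAt ℝ Ψ (c, y)) (a : ℝ)
    (w : E) :
    fderiv ℝ Ψ (c, y) (a, w) =
      a • deriv (fun s => Ψ (s, y)) c + fderiv ℝ (fun z => Ψ (c, z)) y w := by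
  rw [deriv_slice_left h, fderiv_slice_right h, ← map_smul, ← map_add]
  simp

theorem deriv_comp_curve {c : ℝ} {r : ℝ → E} (hΨ : DifferentiableAt ℝ Ψ (c, r c))
    (hr : DifferentiableAt ℝ r c) :
    deriv (fun s => Ψ (s, r s)) c =
      deriv (fun s => Ψ (s, r c)) c + fderiv ℝ (fun z => Ψ (c, z)) (r c) (deriv r c) := by
  have hcomp : HasDerivAt (fun s => Ψ (s, r s)) (fderiv ℝ Ψ (c, r c) (1, deriv r c)) c :=
    hΨ.hasFDerivAt.comp_hasDerivAt c ((hasDerivAt_id c).prodMk hr.hasDerivAt)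
  rw [hcomp.deriv, fderiv_apply_eq_add_slices hΨ, one_smul]

variable {q : ℝ × E} {k n : WithTop ℕ∞}

theorem ContDiffAt.eventually_differentiableAt (h : ContDiffAt ℝ n Ψ q) (hn : 1 ≤ n) :
    ∀ᶠ p in 𝓝 q, DifferentiableAt ℝ Ψ p :=
  ((h.of_le hn).eventually (by simp)).mono fun _ hp => hp.differentiableAt one_ne_zero

theorem ContDiffAt.deriv_slice_left (h : ContDiffAt ℝ n Ψ q) (hkn : k + 1 ≤ n) :
    ContDiffAt ℝ k (fun p => deriv (fun s => Ψ (s, p.2)) p.1) q :=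
  ((h.fderiv_right hkn).clm_apply contDiffAt_const).congr_of_eventuallyEq <|
    (h.eventually_differentiableAt (le_add_self.trans hkn)).mono fun _ hp =>
      _root_.deriv_slice_left hp

theorem ContDiffAt.fderiv_slice_right (h : ContDiffAt ℝ n Ψ q) (hkn : k + 1 ≤ n) (w : E) :
    ContDiffAt ℝ k (fun p => fderiv ℝ (fun z => Ψ (p.1, z)) p.2 w) q :=
  ((h.fderiv_right hkn).clm_apply contDiffAt_const).congr_of_eventuallyEq <|
    (h.eventually_differentiableAt (le_add_self.trans hkn)).mono fun _ hp =>
      _root_.fderiv_slice_right hp w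

theorem fderiv_fderiv_apply_const (h : DifferentiableAt ℝ (fderiv ℝ Ψ) q) (v w : ℝ × E) :
    fderiv ℝ (fun p => fderiv ℝ Ψ p v) q w = fderiv ℝ (fderiv ℝ Ψ) q w v := by
  simp [fderiv_clm_apply h (differentiableAt_const v)]

theorem fderiv_deriv_slice_comm {c : ℝ} {y : E} (h : ContDiffAt ℝ 2 Ψ (c, y)) (w : E) :
    fderiv ℝ (fun z => deriv (fun s => Ψ (s, z)) c) y w =
      deriv (fun s => fderiv ℝ (fun z => Ψ (s, z)) y w) c := by
  have h12 : (1 : WithTop ℕ∞) + 1 ≤ 2 := one_add_one_eq_two.le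
  have hD : DifferentiableAt ℝ (fderiv ℝ Ψ) (c, y) :=
    (h.fderiv_right h12).differentiableAt one_ne_zero
  have hΨ := h.eventually_differentiableAt one_le_two
  have hleft : (fun p => deriv (fun s => Ψ (s, p.2)) p.1) =ᶠ[𝓝 (c, y)]
      fun p => fderiv ℝ Ψ p (1, 0) :=
    hΨ.mono fun _ hp => deriv_slice_left hp
  have hright : (fun p => fderiv ℝ (fun z => Ψ (p.1, z)) p.2 w) =ᶠ[𝓝 (c, y)]
      fun p => fderiv ℝ Ψ p (0, w) :=
    hΨ.mono fun _ hp => fderiv_slice_right hp w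
  rw [fderiv_slice_right ((h.deriv_slice_left h12).differentiableAt one_ne_zero),
    deriv_slice_left ((h.fderiv_slice_right h12 w).differentiableAt one_ne_zero),
    hleft.fderiv_eq, hright.fderiv_eq, fderiv_fderiv_apply_const hD, fderiv_fderiv_apply_const hD]
  exact h.isSymmSndFDerivAt (by simp) _ _

end Slices

theorem ContDiffAt.contDiffAt_of_eventually_leftInverse {E : Type*} [NormedAddCommGroup E]
    [NormedSpace ℝ E] [FiniteDimensional ℝ E] {f g : E → E} {a : E} {n : WithTop ℕ∞}
    (hf : ContDiffAt ℝ n f a) (hn : n ≠ 0) (hinj : Function.Injective (fderiv ℝ f a))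
    (hgf : ∀ᶠ x in 𝓝 a, g (f x) = x) : ContDiffAt ℝ n g (f a) := by
  let f' : E ≃L[ℝ] E :=
    (LinearEquiv.ofInjectiveEndo (fderiv ℝ f a : E →ₗ[ℝ] E) hinj).toContinuousLinearEquiv
  have hf' : HasFDerivAt f (f' : E →L[ℝ] E) a := (hf.differentiableAt hn).hasFDerivAt
  have hs := hf.hasStrictFDerivAt' hf' hn
  refine (hf.to_localInverse hf' hn).congr_of_eventuallyEq ?_
  rw [← hs.localInverse_apply_image] at hgf
  filter_upwards [hs.eventually_right_inverse, hs.localInverse_continuousAt.eventually hgf]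
    with y hright hleft
  exact (congrArg g hright).symm.trans hleft

theorem ContinuousLinearMap.injective_fst_prod {E F : Type*} [NormedAddCommGroup E]
    [NormedSpace ℝ E] [NormedAddCommGroup F] [NormedSpace ℝ F] (L : ℝ × E →L[ℝ] F)
    (h : Function.Injective (L ∘L ContinuousLinearMap.inr ℝ ℝ E)) :
    Function.Injective ((ContinuousLinearMap.fst ℝ ℝ E).prod L) := by
  refine (injective_iff_map_eq_zero _).2 fun ⟨s, w⟩ hv => ?_
  obtain ⟨rfl, hw⟩ : s = 0 ∧ L (s, w) = 0 := Prod.mk_eq_zero.1 hv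
  rw [show w = 0 from h (by rw [map_zero]; exact hw), Prod.mk_zero_zero]

theorem Matrix.IsSymm.inv_mulVec_eq_of_vecMul_eq {n α : Type*} [Fintype n] [DecidableEq n]
    [CommRing α] {A : Matrix n n α} (hA : A.IsSymm) (hU : IsUnit A) {v w : n → α}
    (h : v ᵥ* A = w) : A⁻¹ *ᵥ w = v := by
  let := hU.invertible
  refine Matrix.inv_mulVec_eq_vec ?_
  rw [← h, ← Matrix.vecMul_transpose, hA.eq]

section Euclidean

variable {m : ℕ}

theorem dotp_comm (v w : Fin m → ℝ) : dotp v w = dotp w v := dotProduct_comm v w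

theorem dotp_neg_left (v w : Fin m → ℝ) : dotp (-v) w = -dotp v w := neg_dotProduct v w

theorem dotp_single_one_left (i : Fin m) (w : Fin m → ℝ) : dotp (Pi.single i 1) w = w i := by
  simp [dotp, Pi.single_apply]

theorem fderiv_apply_eq_dotp_grad (f : (Fin m → ℝ) → ℝ) (p w : Fin m → ℝ) :
    fderiv ℝ f p w = dotp (grad f p) w := by
  conv_lhs => rw [← Finset.univ_sum_single w]
  refine (map_sum _ _ _).trans (Finset.sum_congr rfl fun i _ => ?_)
  have hsingle : (Pi.single i (w i) : Fin m → ℝ) = w i • Pi.single i 1 := by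
    rw [← Pi.single_smul', smul_eq_mul, mul_one]
  rw [hsingle, map_smul, smul_eq_mul, mul_comm]
  rfl

theorem fderiv_grad_apply {f : (Fin m → ℝ) → ℝ} {p : Fin m → ℝ}
    (h : DifferentiableAt ℝ (grad f) p) (w : Fin m → ℝ) :
    fderiv ℝ (grad f) p w = w ᵥ* hess f p := by
  ext j
  rw [fderiv_pi (differentiableAt_pi.1 h), ContinuousLinearMap.pi_apply,
    fderiv_apply_eq_dotp_grad, dotp, Matrix.vecMul, dotProduct]
  exact Finset.sum_congr rfl fun i _ => mul_comm _ _

theorem hasFDerivAt_dotp {E : Type*} [NormedAddCommGroup E] [NormedSpace ℝ E]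
    {f g : E → Fin m → ℝ} {f' g' : E →L[ℝ] Fin m → ℝ} {p : E}
    (hf : HasFDerivAt f f' p) (hg : HasFDerivAt g g' p) :
    HasFDerivAt (fun q => dotp (f q) (g q))
      (∑ j, (f p j • (ContinuousLinearMap.proj j ∘L g') +
        g p j • (ContinuousLinearMap.proj j ∘L f'))) p :=
  HasFDerivAt.fun_sum fun j _ => (hasFDerivAt_pi'.1 hf j).mul (hasFDerivAt_pi'.1 hg j)

theorem DifferentiableAt.dotp {E : Type*} [NormedAddCommGroup E] [NormedSpace ℝ E]
    {f g : E → Fin m → ℝ} {p : E} (hf : DifferentiableAt ℝ f p) (hg : DifferentiableAt ℝ g p) :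
    DifferentiableAt ℝ (fun q => dotp (f q) (g q)) p :=
  (hasFDerivAt_dotp hf.hasFDerivAt hg.hasFDerivAt).differentiableAt

theorem fderiv_dotp_apply {E : Type*} [NormedAddCommGroup E] [NormedSpace ℝ E]
    {f g : E → Fin m → ℝ} {p : E} (hf : DifferentiableAt ℝ f p) (hg : DifferentiableAt ℝ g p)
    (v : E) :
    fderiv ℝ (fun q => dotp (f q) (g q)) p v =
      dotp (f p) (fderiv ℝ g p v) + dotp (fderiv ℝ f p v) (g p) := by
  rw [(hasFDerivAt_dotp hf.hasFDerivAt hg.hasFDerivAt).fderiv]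
  simp [dotp, Finset.sum_add_distrib, mul_comm]

theorem grad_deriv_comm {u : ℝ → (Fin m → ℝ) → ℝ} {t : ℝ} {x : Fin m → ℝ}
    (hu : ContDiffAt ℝ 2 (fun p : ℝ × (Fin m → ℝ) => u p.1 p.2) (t, x)) :
    grad (fun x' => deriv (fun s => u s x') t) x = deriv (fun s => grad (u s) x) t := by
  have hpd : ∀ i, DifferentiableAt ℝ (fun s => grad (u s) x i) t := fun i =>
    ((hu.fderiv_slice_right one_add_one_eq_two.le (Pi.single i 1)).differentiableAt
      one_ne_zero).comp
      (f := fun s => (s, x)) t (differentiableAt_id.prodMk (differentiableAt_const x))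
  rw [deriv_pi hpd]
  ext i
  exact fderiv_deriv_slice_comm hu (Pi.single i 1)

theorem deriv_deriv_comp_curve {φ : ℝ → (Fin m → ℝ) → ℝ} {r : ℝ → Fin m → ℝ} {t : ℝ}
    (hφ : ContDiffAt ℝ 2 (fun p : ℝ × (Fin m → ℝ) => φ p.1 p.2) (t, r t))
    (hr : DifferentiableAt ℝ r t) :
    deriv (fun s => deriv (fun s' => φ s' (r s)) s) t =
      deriv (fun s => deriv (fun s' => φ s' (r t)) s) t +
        dotp (grad (fun ρ => deriv (fun s => φ s ρ) t) (r t)) (deriv r t) := by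
  rw [← fderiv_apply_eq_dotp_grad]
  exact deriv_comp_curve
    ((hφ.deriv_slice_left one_add_one_eq_two.le).differentiableAt one_ne_zero) hr

theorem vecMul_hess_deriv {φ : ℝ → (Fin m → ℝ) → ℝ} {r : ℝ → Fin m → ℝ} {t : ℝ} {x : Fin m → ℝ}
    (hφ : ContDiffAt ℝ 2 (fun p : ℝ × (Fin m → ℝ) => φ p.1 p.2) (t, r t))
    (hr : DifferentiableAt ℝ r t) (hx : ∀ᶠ s in 𝓝 t, grad (φ s) (r s) = x) :
    deriv r t ᵥ* hess (φ t) (r t) = -grad (fun ρ => deriv (fun s => φ s ρ) t) (r t) := by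
  ext j
  have hev : (fun s => pd (φ s) j (r s)) =ᶠ[𝓝 t] fun _ => x j :=
    hx.mono fun s hs => congrFun hs j
  have hconst : deriv (fun s => pd (φ s) j (r s)) t = 0 := by
    rw [hev.deriv_eq, deriv_const]
  have hΨ : DifferentiableAt ℝ (fun q : ℝ × (Fin m → ℝ) => pd (φ q.1) j q.2) (t, r t) :=
    (hφ.fderiv_slice_right one_add_one_eq_two.le (Pi.single j 1)).differentiableAt one_ne_zero
  rw [deriv_comp_curve hΨ hr, fderiv_apply_eq_dotp_grad] at hconst
  have hmixed : deriv (fun s => pd (φ s) j (r t)) t =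
      grad (fun ρ => deriv (fun s => φ s ρ) t) (r t) j :=
    (fderiv_deriv_slice_comm hφ (Pi.single j 1)).symm
  rw [hmixed] at hconst
  simp only [Matrix.vecMul, dotProduct, Pi.neg_apply]
  rw [eq_neg_iff_add_eq_zero, add_comm, ← hconst]
  simp only [dotp, grad, hess, Matrix.of_apply, mul_comm]

theorem fderiv_legendre_apply {Ψ : ℝ × (Fin m → ℝ) → ℝ} {r : ℝ × (Fin m → ℝ) → Fin m → ℝ}
    {p : ℝ × (Fin m → ℝ)} (hΨ : DifferentiableAt ℝ Ψ (p.1, r p)) (hr : DifferentiableAt ℝ r p)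
    (hgrad : grad (fun z => Ψ (p.1, z)) (r p) = p.2) (v : ℝ × (Fin m → ℝ)) :
    fderiv ℝ (fun q => dotp q.2 (r q) - Ψ (q.1, r q)) p v =
      dotp v.2 (r p) - v.1 * deriv (fun s => Ψ (s, r p)) p.1 := by
  have hcurve : HasFDerivAt (fun q : ℝ × (Fin m → ℝ) => (q.1, r q))
      ((ContinuousLinearMap.fst ℝ ℝ (Fin m → ℝ)).prod (fderiv ℝ r p)) p :=
    hasFDerivAt_fst.prodMk hr.hasFDerivAt
  have hΨr : HasFDerivAt (fun q => Ψ (q.1, r q))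
      ((fderiv ℝ Ψ (p.1, r p)).comp ((ContinuousLinearMap.fst ℝ ℝ _).prod (fderiv ℝ r p))) p :=
    hΨ.hasFDerivAt.comp p hcurve
  rw [fderiv_fun_sub (differentiableAt_snd.dotp hr) hΨr.differentiableAt, hΨr.fderiv,
    sub_apply, fderiv_dotp_apply differentiableAt_snd hr]
  simp only [ContinuousLinearMap.comp_apply, ContinuousLinearMap.prod_apply,
    ContinuousLinearMap.coe_fst', fderiv_snd, ContinuousLinearMap.coe_snd']
  rw [fderiv_apply_eq_add_slices hΨ, fderiv_apply_eq_dotp_grad, hgrad, smul_eq_mul]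
  ring

theorem legendre_envelope {I : Set ℝ} {P : Set (Fin m → ℝ)} {φ u : ℝ → (Fin m → ℝ) → ℝ}
    {R : ℝ → (Fin m → ℝ) → Fin m → ℝ} (hIP : IsOpen (I ×ˢ P))
    (hu : ∀ s ∈ I, ∀ y ∈ P, u s y = dotp y (R s y) - φ s (R s y)) {s : ℝ} {y : Fin m → ℝ}
    (hs : s ∈ I) (hy : y ∈ P)
    (hφ : DifferentiableAt ℝ (fun p : ℝ × (Fin m → ℝ) => φ p.1 p.2) (s, R s y))
    (hR : DifferentiableAt ℝ (fun p : ℝ × (Fin m → ℝ) => R p.1 p.2) (s, y))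
    (hR₁ : grad (φ s) (R s y) = y) :
    deriv (fun s' => u s' y) s = -deriv (fun s' => φ s' (R s y)) s ∧ grad (u s) y = R s y := by
  have hev : (fun p : ℝ × (Fin m → ℝ) => u p.1 p.2) =ᶠ[𝓝 (s, y)]
      fun p => dotp p.2 (R p.1 p.2) - φ p.1 (R p.1 p.2) :=
    (hIP.eventually_mem ⟨hs, hy⟩).mono fun p hp => hu p.1 hp.1 p.2 hp.2
  have hU : DifferentiableAt ℝ (fun p : ℝ × (Fin m → ℝ) => u p.1 p.2) (s, y) :=
    ((differentiableAt_snd.dotp hR).sub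
      (hφ.comp (s, y) (differentiableAt_fst.prodMk hR))).congr_of_eventuallyEq hev
  have hfderiv : ∀ v, fderiv ℝ (fun p : ℝ × (Fin m → ℝ) => u p.1 p.2) (s, y) v =
      dotp v.2 (R s y) - v.1 * deriv (fun s' => φ s' (R s y)) s := by
    rw [hev.fderiv_eq]
    exact fderiv_legendre_apply hφ hR hR₁
  constructor
  · rw [deriv_slice_left hU, hfderiv]
    simp [dotp]
  · ext i
    rw [grad, pd, fderiv_slice_right hU, hfderiv, dotp_single_one_left]
    simp

theorem contDiffAt_legendre_inverse {I : Set ℝ} {φ : ℝ → (Fin m → ℝ) → ℝ}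
    {R : ℝ → (Fin m → ℝ) → Fin m → ℝ} (hI : IsOpen I)
    (hR₂ : ∀ s ∈ I, ∀ ρ, R s (grad (φ s) ρ) = ρ) {t : ℝ} {x : Fin m → ℝ} (ht : t ∈ I)
    (hφ : ContDiffAt ℝ 2 (fun p : ℝ × (Fin m → ℝ) => φ p.1 p.2) (t, R t x))
    (hH : IsUnit (hess (φ t) (R t x))) (hx : grad (φ t) (R t x) = x) :
    ContDiffAt ℝ 1 (fun p : ℝ × (Fin m → ℝ) => R p.1 p.2) (t, x) := by
  have hg : ContDiffAt ℝ 1 (fun q : ℝ × (Fin m → ℝ) => grad (φ q.1) q.2) (t, R t x) :=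
    contDiffAt_pi.2 fun i => hφ.fderiv_slice_right one_add_one_eq_two.le (Pi.single i 1)
  have hdg := hg.differentiableAt one_ne_zero
  have hslice : ∀ w, fderiv ℝ (fun q : ℝ × (Fin m → ℝ) => grad (φ q.1) q.2) (t, R t x) (0, w) =
      w ᵥ* hess (φ t) (R t x) := fun w => by
    rw [← fderiv_slice_right hdg]
    refine fderiv_grad_apply (f := φ t) ?_ w
    exact hdg.comp _ (hasFDerivAt_prodMk_right t _).differentiableAt
  have hinj : Function.Injective
      (fderiv ℝ (fun q : ℝ × (Fin m → ℝ) => (q.1, grad (φ q.1) q.2)) (t, R t x)) := by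
    rw [(hasFDerivAt_fst.prodMk hdg.hasFDerivAt).fderiv]
    refine ContinuousLinearMap.injective_fst_prod _ fun v w hvw => ?_
    simp only [ContinuousLinearMap.comp_apply, ContinuousLinearMap.inr_apply, hslice] at hvw
    exact Matrix.vecMul_injective_iff_isUnit.2 hH hvw
  have hleft : ∀ᶠ q in 𝓝 (t, R t x), R q.1 (grad (φ q.1) q.2) = q.2 :=
    (continuous_fst.continuousAt.eventually (hI.eventually_mem ht)).mono fun q hq => hR₂ q.1 hq q.2
  have hinv := (contDiffAt_fst.prodMk hg).contDiffAt_of_eventually_leftInverse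
    (g := fun p => (p.1, R p.1 p.2)) one_ne_zero hinj (hleft.mono fun q hq => by simp [hq])
  simp only [hx] at hinv
  exact contDiffAt_snd.comp _ hinv

theorem second_variation_of_envelope {φ u : ℝ → (Fin m → ℝ) → ℝ} {r : ℝ → Fin m → ℝ}
    {t : ℝ} {x : Fin m → ℝ}
    (hφ : ContDiffAt ℝ 2 (fun p : ℝ × (Fin m → ℝ) => φ p.1 p.2) (t, r t))
    (hu : ContDiffAt ℝ 2 (fun p : ℝ × (Fin m → ℝ) => u p.1 p.2) (t, x))
    (hr : DifferentiableAt ℝ r t) (hx : ∀ᶠ s in 𝓝 t, grad (φ s) (r s) = x)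
    (hut : (fun s => deriv (fun s' => u s' x) s) =ᶠ[𝓝 t]
      fun s => -deriv (fun s' => φ s' (r s)) s)
    (hux : (fun s => grad (u s) x) =ᶠ[𝓝 t] r)
    (hsymm : (hess (φ t) (r t)).IsSymm) (hunit : IsUnit (hess (φ t) (r t))) :
    deriv (fun t' => deriv (fun s => u s x) t') t
          + deriv (fun t' => deriv (fun s => φ s (r t)) t') t
          + dotp (grad (fun ρ' => deriv (fun s => φ s ρ') t) (r t))
              (grad (fun x' => deriv (fun s => u s x') t) x)
        = 0
      ∧ deriv (fun t' => deriv (fun s => u s x) t') t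
          = -(deriv (fun t' => deriv (fun s => φ s (r t)) t') t)
            + dotp
                ((hess (φ t) (r t))⁻¹.mulVec
                  (grad (fun ρ' => deriv (fun s => φ s ρ') t) (r t)))
                (grad (fun ρ' => deriv (fun s => φ s ρ') t) (r t)) := by
  set G := grad (fun ρ' => deriv (fun s => φ s ρ') t) (r t)
  have hutt : deriv (fun t' => deriv (fun s => u s x) t') t =
      -deriv (fun t' => deriv (fun s => φ s (r t)) t') t - dotp G (deriv r t) := by
    rw [hut.deriv_eq, deriv.fun_neg, deriv_deriv_comp_curve hφ hr]
    ring
  have hutx : grad (fun x' => deriv (fun s => u s x') t) x = deriv r t := by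
    rw [grad_deriv_comm hu, hux.deriv_eq]
  have hinv : (hess (φ t) (r t))⁻¹ *ᵥ G = -deriv r t := by
    refine hsymm.inv_mulVec_eq_of_vecMul_eq hunit ?_
    rw [Matrix.neg_vecMul, vecMul_hess_deriv hφ hr hx, neg_neg]
  constructor
  · rw [hutt, hutx]
    ring
  · rw [hutt, hinv, dotp_neg_left, dotp_comm (deriv r t)]
    ring

end Euclidean

theorem legendre_second_variation_general
    {m : ℕ}
    (I : Set ℝ) (a b : ℝ) (hI : I = Set.Ioo a b)
    (P : Set (Fin m → ℝ)) (hP : IsOpen P)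
    (φ : ℝ → (Fin m → ℝ) → ℝ)
    (hφ : ContDiffOn ℝ (⊤ : ℕ∞)
      (fun p : ℝ × (Fin m → ℝ) => φ p.1 p.2) (I ×ˢ Set.univ))
    (hpos : ∀ t ∈ I, ∀ ρ : Fin m → ℝ, (hess (φ t) ρ).PosDef)
    (R : ℝ → (Fin m → ℝ) → (Fin m → ℝ))
    (hR₁ : ∀ t ∈ I, ∀ x ∈ P, grad (φ t) (R t x) = x)
    (hR₂ : ∀ t ∈ I, ∀ ρ : Fin m → ℝ, R t (grad (φ t) ρ) = ρ)
    (u : ℝ → (Fin m → ℝ) → ℝ)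
    (hu : ∀ t ∈ I, ∀ x ∈ P, u t x = dotp x (R t x) - φ t (R t x))
    (husm : ContDiffOn ℝ (⊤ : ℕ∞)
      (fun p : ℝ × (Fin m → ℝ) => u p.1 p.2) (I ×ˢ P)) :
    ∀ t ∈ I, ∀ x ∈ P,
      deriv (fun t' => deriv (fun s => u s x) t') t
          + deriv (fun t' => deriv (fun s => φ s (R t x)) t') t
          + dotp (grad (fun ρ' => deriv (fun s => φ s ρ') t) (R t x))
              (grad (fun x' => deriv (fun s => u s x') t) x)
        = 0
      ∧ deriv (fun t' => deriv (fun s => u s x) t') t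
          = -(deriv (fun t' => deriv (fun s => φ s (R t x)) t') t)
            + dotp
                ((hess (φ t) (R t x))⁻¹.mulVec
                  (grad (fun ρ' => deriv (fun s => φ s ρ') t) (R t x)))
                (grad (fun ρ' => deriv (fun s => φ s ρ') t) (R t x)) := by
  intro t ht x hx
  have hIo : IsOpen I := hI ▸ isOpen_Ioo
  have htwo : (2 : WithTop ℕ∞) ≤ ((⊤ : ℕ∞) : WithTop ℕ∞) := by decide
  have hΦ : ∀ s ∈ I, ∀ ρ, ContDiffAt ℝ 2 (fun p : ℝ × (Fin m → ℝ) => φ p.1 p.2) (s, ρ) :=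
    fun s hs ρ => (hφ.contDiffAt ((hIo.prod isOpen_univ).mem_nhds ⟨hs, trivial⟩)).of_le htwo
  have hR : ∀ s ∈ I, ∀ y ∈ P,
      DifferentiableAt ℝ (fun p : ℝ × (Fin m → ℝ) => R p.1 p.2) (s, y) := fun s hs y hy =>
    (contDiffAt_legendre_inverse hIo hR₂ hs (hΦ s hs _) (hpos s hs _).isUnit
      (hR₁ s hs y hy)).differentiableAt one_ne_zero
  have henv : ∀ s ∈ I, deriv (fun s' => u s' x) s = -deriv (fun s' => φ s' (R s x)) s ∧
      grad (u s) x = R s x := fun s hs => legendre_envelope (hIo.prod hP) hu hs hx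
    ((hΦ s hs _).differentiableAt two_ne_zero) (hR s hs x hx) (hR₁ s hs x hx)
  have hnear : ∀ᶠ s in 𝓝 t, s ∈ I := hIo.eventually_mem ht
  exact second_variation_of_envelope (r := fun s => R s x) (hΦ t ht _)
    ((husm.contDiffAt ((hIo.prod hP).mem_nhds ⟨ht, hx⟩)).of_le htwo)
    ((hR t ht x hx).comp (f := fun s => (s, x)) t
      (differentiableAt_id.prodMk (differentiableAt_const x)))
    (hnear.mono fun s hs => hR₁ s hs x hx) (hnear.mono fun s hs => (henv s hs).1)
    (hnear.mono fun s hs => (henv s hs).2)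
    (Matrix.isHermitian_iff_isSymm.1 (hpos t ht _).isHermitian) (hpos t ht _).isUnit

/-- **Second variation of the Legendre transform:** with `ρ = ρ(t,x) = (∇_ρφ(t,·))⁻¹(x)`,
`∂²u/∂t²(t,x) + ∂²φ/∂t²(t,ρ) + ⟨∇_ρ(∂_tφ)(t,ρ), ∇_x(∂_tu)(t,x)⟩ = 0`, equivalently
`∂²u/∂t²(t,x) = −∂²φ/∂t²(t,ρ) + ⟨(∇²_ρφ(t,ρ))⁻¹ ∇_ρ(∂_tφ)(t,ρ), ∇_ρ(∂_tφ)(t,ρ)⟩`. -/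
theorem legendre_second_variation
    {m : ℕ} (hm : 1 ≤ m)
    (I : Set ℝ) (a b : ℝ) (hI : I = Set.Ioo a b)
    (P : Set (Fin m → ℝ)) (hP : IsOpen P)
    (φ : ℝ → (Fin m → ℝ) → ℝ)
    (hφ : ContDiffOn ℝ (⊤ : ℕ∞)
      (fun p : ℝ × (Fin m → ℝ) => φ p.1 p.2) (I ×ˢ Set.univ))
    (hpos : ∀ t ∈ I, ∀ ρ : Fin m → ℝ, (hess (φ t) ρ).PosDef)
    (R : ℝ → (Fin m → ℝ) → (Fin m → ℝ))
    (hmem : ∀ t ∈ I, ∀ ρ : Fin m → ℝ, grad (φ t) ρ ∈ P)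
    (hR₁ : ∀ t ∈ I, ∀ x ∈ P, grad (φ t) (R t x) = x)
    (hR₂ : ∀ t ∈ I, ∀ ρ : Fin m → ℝ, R t (grad (φ t) ρ) = ρ)
    (u : ℝ → (Fin m → ℝ) → ℝ)
    (hu : ∀ t ∈ I, ∀ x ∈ P, u t x = dotp x (R t x) - φ t (R t x))
    (husm : ContDiffOn ℝ (⊤ : ℕ∞)
      (fun p : ℝ × (Fin m → ℝ) => u p.1 p.2) (I ×ˢ P)) :
    ∀ t ∈ I, ∀ x ∈ P,
      deriv (fun t' => deriv (fun s => u s x) t') t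
          + deriv (fun t' => deriv (fun s => φ s (R t x)) t') t
          + dotp (grad (fun ρ' => deriv (fun s => φ s ρ') t) (R t x))
              (grad (fun x' => deriv (fun s => u s x') t) x)
        = 0
      ∧ deriv (fun t' => deriv (fun s => u s x) t') t
          = -(deriv (fun t' => deriv (fun s => φ s (R t x)) t') t)
            + dotp
                ((hess (φ t) (R t x))⁻¹.mulVec
                  (grad (fun ρ' => deriv (fun s => φ s ρ') t) (R t x)))
                (grad (fun ρ' => deriv (fun s => φ s ρ') t) (R t x)) :=
  legendre_second_variation_general I a b hI P hP φ hφ hpos R hR₁ hR₂ u hu husm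
end
end

section
/- Symmetrization identity for second parameter derivatives of log-sum-exp: for every (y,ρ) ∈ Ω × ℝᵐ and all indices a, b ∈ {1,…,n}, ∂²/∂y_a∂y_b log S(y,ρ) = S(y,ρ)^{−2} · Σ_{α,β ∈ A} c_α(y) c_β(y) e^{⟨α+β, ρ⟩} · [ ∂²_{y_a y_b} log c_α(y) + ½ · ∂_{y_a} log(c_α(y)/c_β(y)) · ∂_{y_b} log(c_α(y)/c_β(y)) ], where the double sum runs over all ordered pairs (α,β) ∈ A × A. -/
open scoped BigOperators
open MeasureTheory Real

noncomputable section

/-!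
Write `w_α = c_α e^{⟨α,ρ⟩}`, so that `S = Σ w_α` and `∂w_α = e^{⟨α,ρ⟩} ∂c_α`. Differentiating
`log S` twice gives `S⁻²(S Σ w_α ∂²c_α / c_α - (Σ w_α ∂_a log c_α)(Σ w_β ∂_b log c_β))`, and
`∂²c_α / c_α = ∂²log c_α + ∂_a log c_α ∂_b log c_α`. The covariance term is then symmetrized by
`Σ_{α,β} w_α w_β (u_α - u_β)(v_α - v_β) = 2 (Σ w)(Σ w u v) - 2 (Σ w u)(Σ w v)`.
-/

open Filter Topology

theorem Finset.sum_sum_mul_add_half_mul_sub_mul_sub {ι : Type*} (s : Finset ι)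
    (w H u v : ι → ℝ) :
    ∑ a ∈ s, ∑ b ∈ s, w a * w b * (H a + 1 / 2 * (u a - u b) * (v a - v b))
      = (∑ a ∈ s, w a) * ∑ a ∈ s, w a * (H a + u a * v a)
        - (∑ a ∈ s, w a * u a) * ∑ a ∈ s, w a * v a := by
  have expand : ∀ a b, w a * w b * (H a + 1 / 2 * (u a - u b) * (v a - v b))
      = w a * (H a + u a * v a) * w b - 1 / 2 * (w a * (u a * v a) * w b)
        + 1 / 2 * (w a * (w b * (u b * v b))) - 1 / 2 * (w a * u a * (w b * v b))
        - 1 / 2 * (w a * v a * (w b * u b)) := by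
    intro a b; ring
  simp only [expand, Finset.sum_add_distrib, Finset.sum_sub_distrib, ← Finset.mul_sum,
    ← Finset.sum_mul]
  ring

theorem dotp_add_left {k : ℕ} (u v w : Fin k → ℝ) : dotp (u + v) w = dotp u w + dotp v w := by
  simp [dotp, add_mul, Finset.sum_add_distrib]

section PartialDerivative

variable {k : ℕ} {f g : (Fin k → ℝ) → ℝ} {x : Fin k → ℝ}

theorem Filter.EventuallyEq.pd_eq (h : f =ᶠ[𝓝 x] g) (i : Fin k) : pd f i x = pd g i x := by
  rw [pd, pd, h.fderiv_eq]

theorem pd_sum_mul_const {ι : Type*} (s : Finset ι) {f : ι → (Fin k → ℝ) → ℝ} (r : ι → ℝ)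
    (hf : ∀ a ∈ s, DifferentiableAt ℝ (f a) x) (i : Fin k) :
    pd (fun y => ∑ a ∈ s, f a y * r a) i x = ∑ a ∈ s, pd (f a) i x * r a := by
  rw [pd, fderiv_fun_sum fun a ha => (hf a ha).mul_const (r a)]
  simp only [FunLike.coe_sum, Finset.sum_apply]
  refine Finset.sum_congr rfl fun a ha => ?_
  simp [pd, fderiv_mul_const (hf a ha), mul_comm]

theorem pd_log (hf : DifferentiableAt ℝ f x) (hx : f x ≠ 0) (i : Fin k) :
    pd (fun y => Real.log (f y)) i x = pd f i x / f x := by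
  rw [pd, fderiv.log hf hx]
  simp [pd, div_eq_inv_mul]

theorem pd_div (hf : DifferentiableAt ℝ f x) (hg : DifferentiableAt ℝ g x) (hx : g x ≠ 0)
    (i : Fin k) :
    pd (fun y => f y / g y) i x = (pd f i x * g x - f x * pd g i x) / g x ^ 2 := by
  have hquot : (fun y => f y / g y) = f * ((fun t => t⁻¹) ∘ g) := by
    funext y; simp [div_eq_mul_inv]
  rw [pd, hquot,
    (hf.hasFDerivAt.mul ((hasDerivAt_inv hx).comp_hasFDerivAt x hg.hasFDerivAt)).fderiv]
  simp [pd]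
  field_simp
  ring

theorem mul_pd_log (hf : DifferentiableAt ℝ f x) (hx : f x ≠ 0) (i : Fin k) :
    f x * pd (fun y => Real.log (f y)) i x = pd f i x := by
  rw [pd_log hf hx]
  field_simp

theorem pd_log_div (hf : DifferentiableAt ℝ f x) (hg : DifferentiableAt ℝ g x)
    (hfx : f x ≠ 0) (hgx : g x ≠ 0) (i : Fin k) :
    pd (fun y => Real.log (f y / g y)) i x
      = pd (fun y => Real.log (f y)) i x - pd (fun y => Real.log (g y)) i x := by
  have hdiv : DifferentiableAt ℝ (fun y => f y / g y) x := by
    simpa only [div_eq_mul_inv] using hf.fun_mul (hg.fun_inv hgx)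
  rw [pd_log hdiv (div_ne_zero hfx hgx), pd_div hf hg hgx, pd_log hf hfx, pd_log hg hgx]
  field_simp

theorem ContDiffAt.differentiableAt_pd (hf : ContDiffAt ℝ 2 f x) (j : Fin k) :
    DifferentiableAt ℝ (fun y => pd f j y) x :=
  ((hf.fderiv_right (m := 1) (by norm_num)).clm_apply contDiffAt_const).differentiableAt
    (by norm_num)

theorem ContDiffAt.eventually_differentiableAt_s15 (hf : ContDiffAt ℝ 2 f x) :
    ∀ᶠ y in 𝓝 x, DifferentiableAt ℝ f y :=
  (hf.eventually (by simp)).mono fun _ hy => hy.differentiableAt (by norm_num)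

theorem pd_pd_sum_mul_const {ι : Type*} (s : Finset ι) {f : ι → (Fin k → ℝ) → ℝ} (r : ι → ℝ)
    (hf : ∀ a ∈ s, ContDiffAt ℝ 2 (f a) x) (i j : Fin k) :
    pd (fun y => pd (fun z => ∑ a ∈ s, f a z * r a) j y) i x
      = ∑ a ∈ s, pd (fun y => pd (f a) j y) i x * r a := by
  have hderiv : (fun y => pd (fun z => ∑ a ∈ s, f a z * r a) j y)
      =ᶠ[𝓝 x] fun y => ∑ a ∈ s, pd (f a) j y * r a := by
    filter_upwards [(s.eventually_all).2 fun a ha => (hf a ha).eventually_differentiableAt_s15]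
      with y hy
    exact pd_sum_mul_const s r hy j
  rw [hderiv.pd_eq,
    pd_sum_mul_const s r fun a ha => (hf a ha).differentiableAt_pd j]

theorem pd_pd_log (hf : ContDiffAt ℝ 2 f x) (hx : f x ≠ 0) (i j : Fin k) :
    pd (fun y => pd (fun z => Real.log (f z)) j y) i x
      = (pd (fun y => pd f j y) i x * f x - pd f j x * pd f i x) / f x ^ 2 := by
  have hderiv : (fun y => pd (fun z => Real.log (f z)) j y) =ᶠ[𝓝 x] fun y => pd f j y / f y := by
    filter_upwards [hf.eventually_differentiableAt_s15,
      hf.continuousAt.eventually_ne hx] with y hdiff hne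
    exact pd_log hdiff hne j
  rw [hderiv.pd_eq,
    pd_div (hf.differentiableAt_pd j) (hf.differentiableAt (by norm_num)) hx]

theorem mul_pd_pd_log_add (hf : ContDiffAt ℝ 2 f x) (hx : f x ≠ 0) (i j : Fin k) :
    f x * (pd (fun y => pd (fun z => Real.log (f z)) j y) i x
        + pd (fun y => Real.log (f y)) i x * pd (fun y => Real.log (f y)) j x)
      = pd (fun y => pd f j y) i x := by
  have hf' := hf.differentiableAt (by norm_num)
  rw [pd_pd_log hf hx, pd_log hf' hx, pd_log hf' hx]
  field_simp
  ring

theorem pd_pd_log_sum_mul_const {ι : Type*} (s : Finset ι) {f : ι → (Fin k → ℝ) → ℝ}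
    (r : ι → ℝ) (hf : ∀ a ∈ s, ContDiffAt ℝ 2 (f a) x) (hfx : ∀ a ∈ s, f a x ≠ 0)
    (hS : ∑ a ∈ s, f a x * r a ≠ 0) (i j : Fin k) :
    pd (fun y => pd (fun z => Real.log (∑ a ∈ s, f a z * r a)) j y) i x
      = ((∑ a ∈ s, f a x * r a) ^ 2)⁻¹ * ∑ a ∈ s, ∑ b ∈ s,
          f a x * r a * (f b x * r b)
            * (pd (fun y => pd (fun z => Real.log (f a z)) j y) i x
              + 1 / 2 * (pd (fun z => Real.log (f a z)) i x - pd (fun z => Real.log (f b z)) i x)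
                * (pd (fun z => Real.log (f a z)) j x - pd (fun z => Real.log (f b z)) j x)) := by
  have hf' : ∀ a ∈ s, DifferentiableAt ℝ (f a) x := fun a ha =>
    (hf a ha).differentiableAt (by norm_num)
  have hsum : ContDiffAt ℝ 2 (fun z => ∑ a ∈ s, f a z * r a) x :=
    ContDiffAt.sum fun a ha => (hf a ha).mul contDiffAt_const
  have hgrad : ∀ l, ∑ a ∈ s, f a x * r a * pd (fun z => Real.log (f a z)) l x
      = ∑ a ∈ s, pd (f a) l x * r a := fun l => Finset.sum_congr rfl fun a ha => by
    rw [mul_right_comm, mul_pd_log (hf' a ha) (hfx a ha)]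
  have hhess : ∑ a ∈ s, f a x * r a * (pd (fun y => pd (fun z => Real.log (f a z)) j y) i x
        + pd (fun z => Real.log (f a z)) i x * pd (fun z => Real.log (f a z)) j x)
      = ∑ a ∈ s, pd (fun y => pd (f a) j y) i x * r a := Finset.sum_congr rfl fun a ha => by
    rw [mul_right_comm, mul_pd_pd_log_add (hf a ha) (hfx a ha)]
  rw [pd_pd_log hsum hS, pd_pd_sum_mul_const s r hf, pd_sum_mul_const s r hf',
    pd_sum_mul_const s r hf', Finset.sum_sum_mul_add_half_mul_sub_mul_sub, hhess, hgrad,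
    hgrad]
  field_simp

end PartialDerivative

theorem log_sum_exp_second_parameter_derivative_symmetrization_general
    {m n : ℕ}
    (Ω : Set (Fin n → ℝ)) (hΩ : IsOpen Ω)
    (A : Finset (Fin m → ℝ)) (hA : A.Nonempty)
    (c : (Fin m → ℝ) → (Fin n → ℝ) → ℝ)
    (hc : ∀ α ∈ A, ContDiffOn ℝ (⊤ : ℕ∞) (c α) Ω ∧ ∀ y ∈ Ω, 0 < c α y) :
    ∀ y ∈ Ω, ∀ (ρ : Fin m → ℝ) (i j : Fin n),
      pd (fun y'' =>
          pd (fun y' => Real.log (∑ α ∈ A, c α y' * Real.exp (dotp α ρ))) j y'') i y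
        = ((∑ α ∈ A, c α y * Real.exp (dotp α ρ)) ^ 2)⁻¹
            * ∑ α ∈ A, ∑ β ∈ A,
                c α y * c β y * Real.exp (dotp (α + β) ρ)
                  * (pd (fun y'' => pd (fun y' => Real.log (c α y')) j y'') i y
                      + (1 / 2)
                        * pd (fun y' => Real.log (c α y' / c β y')) i y
                        * pd (fun y' => Real.log (c α y' / c β y')) j y) := by
  intro y hy ρ i j
  have hcy : ∀ α ∈ A, 0 < c α y := fun α hα => (hc α hα).2 y hy
  have hcα : ∀ α ∈ A, ContDiffAt ℝ 2 (c α) y := fun α hα =>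
    ((hc α hα).1.contDiffAt (hΩ.mem_nhds hy)).of_le (WithTop.coe_le_coe.2 le_top)
  have hS : 0 < ∑ α ∈ A, c α y * Real.exp (dotp α ρ) :=
    Finset.sum_pos (fun α hα => mul_pos (hcy α hα) (Real.exp_pos _)) hA
  rw [pd_pd_log_sum_mul_const A _ hcα (fun α hα => (hcy α hα).ne') hS.ne']
  congr 1
  refine Finset.sum_congr rfl fun α hα => Finset.sum_congr rfl fun β hβ => ?_
  have hd : ∀ γ ∈ A, DifferentiableAt ℝ (c γ) y := fun γ hγ =>
    (hcα γ hγ).differentiableAt (by norm_num)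
  rw [pd_log_div (hd α hα) (hd β hβ) (hcy α hα).ne' (hcy β hβ).ne',
    pd_log_div (hd α hα) (hd β hβ) (hcy α hα).ne' (hcy β hβ).ne', dotp_add_left, Real.exp_add]
  ring

/-- **Symmetrization identity for second parameter derivatives of log-sum-exp:** with
`S(y,ρ) = Σ_{α ∈ A} c_α(y) e^{⟨α,ρ⟩}`, for `y ∈ Ω` one has
`∂²_{y_a y_b} log S = S⁻² Σ_{α,β} c_α c_β e^{⟨α+β,ρ⟩}
  [∂²_{y_a y_b} log c_α + ½ ∂_{y_a} log(c_α/c_β) ∂_{y_b} log(c_α/c_β)]`. -/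
theorem log_sum_exp_second_parameter_derivative_symmetrization
    {m n : ℕ} (hm : 1 ≤ m) (hn : 1 ≤ n)
    (Ω : Set (Fin n → ℝ)) (hΩ : IsOpen Ω)
    (A : Finset (Fin m → ℝ)) (hA : A.Nonempty)
    (c : (Fin m → ℝ) → (Fin n → ℝ) → ℝ)
    (hc : ∀ α ∈ A, ContDiffOn ℝ (⊤ : ℕ∞) (c α) Ω ∧ ∀ y ∈ Ω, 0 < c α y) :
    ∀ y ∈ Ω, ∀ (ρ : Fin m → ℝ) (i j : Fin n),
      pd (fun y'' =>
          pd (fun y' => Real.log (∑ α ∈ A, c α y' * Real.exp (dotp α ρ))) j y'') i y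
        = ((∑ α ∈ A, c α y * Real.exp (dotp α ρ)) ^ 2)⁻¹
            * ∑ α ∈ A, ∑ β ∈ A,
                c α y * c β y * Real.exp (dotp (α + β) ρ)
                  * (pd (fun y'' => pd (fun y' => Real.log (c α y')) j y'') i y
                      + (1 / 2)
                        * pd (fun y' => Real.log (c α y' / c β y')) i y
                        * pd (fun y' => Real.log (c α y' / c β y')) j y) :=
  log_sum_exp_second_parameter_derivative_symmetrization_general Ω hΩ A hA c hc
end
end
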